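/- For integers t ≥ 5 and t ≤ k ≤ t + 1, there exists an edge-coloring of K_{t,t} = G(U,V) with exactly k colors containing no rainbow K_{1,3} and no monochromatic K_{1,t}: partition U and V into k−1 nonempty parts U_1,…,U_{k−1} and V_1,…,V_{k−1}, color all edges between U_i and V_i with color i for i ∈ [k−1], and all remaining edges with color k. -/

import Mathlib

open Function Finset SimpleGraph

/-- A rainbow path on 4 vertices `u₁ v₁ u₂ v₂` (middle pattern). -/
def rbP4pat {N : ℕ} {γ : Type*} (c : Fin N → Fin N → γ) : Prop :=
  ∃ u₁ u₂ v₁ v₂ : Fin N, u₁ ≠ u₂ ∧ v₁ ≠ v₂ ∧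
    c u₁ v₁ ≠ c u₂ v₁ ∧ c u₁ v₁ ≠ c u₂ v₂ ∧ c u₂ v₁ ≠ c u₂ v₂

/-- The coloring `c` of `K_{N,N}` contains a rainbow path on 4 vertices. -/
def hasRainbowP4 {N : ℕ} {γ : Type*} (c : Fin N → Fin N → γ) : Prop :=
  rbP4pat c ∨ rbP4pat (fun v u => c u v)

/-- A rainbow path on 5 vertices `u₁ v₁ u₂ v₂ u₃` (one-sided pattern). -/
def rbP5pat {N : ℕ} {γ : Type*} (c : Fin N → Fin N → γ) : Prop :=
  ∃ u₁ u₂ u₃ v₁ v₂ : Fin N, u₁ ≠ u₂ ∧ u₁ ≠ u₃ ∧ u₂ ≠ u₃ ∧ v₁ ≠ v₂ ∧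
    c u₁ v₁ ≠ c u₂ v₁ ∧ c u₁ v₁ ≠ c u₂ v₂ ∧ c u₁ v₁ ≠ c u₃ v₂ ∧
    c u₂ v₁ ≠ c u₂ v₂ ∧ c u₂ v₁ ≠ c u₃ v₂ ∧ c u₂ v₂ ≠ c u₃ v₂

/-- The coloring `c` of `K_{N,N}` contains a rainbow path on 5 vertices. -/
def hasRainbowP5 {N : ℕ} {γ : Type*} (c : Fin N → Fin N → γ) : Prop :=
  rbP5pat c ∨ rbP5pat (fun v u => c u v)

/-- The coloring `c` of `K_{N,N}` contains a rainbow star `K_{1,3}`: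
some vertex (on either side) has three incident edges with pairwise distinct colors. -/
def hasRainbowK13 {N : ℕ} {γ : Type*} (c : Fin N → Fin N → γ) : Prop :=
  (∃ u v₁ v₂ v₃ : Fin N, c u v₁ ≠ c u v₂ ∧ c u v₁ ≠ c u v₃ ∧ c u v₂ ≠ c u v₃) ∨
  (∃ v u₁ u₂ u₃ : Fin N, c u₁ v ≠ c u₂ v ∧ c u₁ v ≠ c u₃ v ∧ c u₂ v ≠ c u₃ v)

/-- The coloring `c` of `K_{N,N}` (first coordinate: side `U`, second: side `V`)
contains a monochromatic copy of the (bipartite) graph `H`. -/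
def hasMonoCopy {N : ℕ} {γ : Type*} {α : Type*} (c : Fin N → Fin N → γ)
    (H : SimpleGraph α) : Prop :=
  ∃ i : γ, ∃ f : α → Fin N ⊕ Fin N, Function.Injective f ∧
    ∀ a b, H.Adj a b → ∃ u v : Fin N, c u v = i ∧
      ((f a = Sum.inl u ∧ f b = Sum.inr v) ∨ (f a = Sum.inr v ∧ f b = Sum.inl u))

/-- The coloring `c` of `K_{N,N}` contains a monochromatic copy of `K_{s,t}`
(in either orientation with respect to the two sides). -/
def hasMonoKst {N : ℕ} {γ : Type*} (c : Fin N → Fin N → γ) (s t : ℕ) : Prop :=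
  ∃ i : γ, ∃ S T : Finset (Fin N),
    ((S.card = s ∧ T.card = t) ∨ (S.card = t ∧ T.card = s)) ∧
    ∀ u ∈ S, ∀ v ∈ T, c u v = i

/-- Disjoint union of a family of graphs, on the sigma type. -/
def sigmaUnion {ι : Type*} {β : ι → Type*} (G : ∀ i, SimpleGraph (β i)) :
    SimpleGraph (Σ i, β i) where
  Adj x y := ∃ i a b, (G i).Adj a b ∧ x = ⟨i, a⟩ ∧ y = ⟨i, b⟩
  symm := by constructor; rintro x y ⟨i, a, b, h, rfl, rfl⟩; exact ⟨i, b, a, h.symm, rfl, rfl⟩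
  loopless := by
    constructor
    rintro x ⟨i, a, b, h, rfl, h2⟩
    obtain rfl : a = b := by simpa using h2
    exact (G i).loopless.irrefl a h

/-!
Each vertex `x` only sees the colors `p x` (its block) and `k` (the rest), so no vertex is the
center of a rainbow `K_{1,3}`. A monochromatic `K_{1,t}` in `K_{t,t}` would be a whole
monochromatic row or column; but the row of `x` contains the diagonal color `p x` and, since
`p` takes at least two values, also the color `k`.
-/

section TwoColorsPerVertex

variable {N : ℕ} {γ : Type*}

lemma not_pairwise_ne_of_mem_pair {x y z a b : γ} (hx : x = a ∨ x = b) (hy : y = a ∨ y = b)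
    (hz : z = a ∨ z = b) (hxy : x ≠ y) (hxz : x ≠ z) (hyz : y ≠ z) : False := by
  rcases hx with rfl | rfl <;> rcases hy with rfl | rfl <;> rcases hz with rfl | rfl <;>
    simp_all

theorem not_hasRainbowK13_of_two_colors {c : Fin N → Fin N → γ}
    (hU : ∀ u, ∃ a b, ∀ v, c u v = a ∨ c u v = b)
    (hV : ∀ v, ∃ a b, ∀ u, c u v = a ∨ c u v = b) : ¬ hasRainbowK13 c := by
  rintro (⟨u, v₁, v₂, v₃, h₁₂, h₁₃, h₂₃⟩ | ⟨v, u₁, u₂, u₃, h₁₂, h₁₃, h₂₃⟩)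
  · obtain ⟨a, b, hab⟩ := hU u
    exact not_pairwise_ne_of_mem_pair (hab v₁) (hab v₂) (hab v₃) h₁₂ h₁₃ h₂₃
  · obtain ⟨a, b, hab⟩ := hV v
    exact not_pairwise_ne_of_mem_pair (hab u₁) (hab u₂) (hab u₃) h₁₂ h₁₃ h₂₃

theorem not_hasMonoKst_one_of_nonconstant {c : Fin N → Fin N → γ}
    (hU : ∀ u, ∃ v v', c u v ≠ c u v') (hV : ∀ v, ∃ u u', c u v ≠ c u' v) :
    ¬ hasMonoKst c 1 N := by
  rintro ⟨i, S, T, ⟨hS, hT⟩ | ⟨hS, hT⟩, hmono⟩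
  · obtain ⟨u, rfl⟩ := card_eq_one.mp hS
    obtain rfl : T = univ := eq_univ_of_card T (hT.trans (Fintype.card_fin N).symm)
    obtain ⟨v, v', hne⟩ := hU u
    exact hne ((hmono u (mem_singleton_self u) v (mem_univ v)).trans
      (hmono u (mem_singleton_self u) v' (mem_univ v')).symm)
  · obtain ⟨v, rfl⟩ := card_eq_one.mp hT
    obtain rfl : S = univ := eq_univ_of_card S (hS.trans (Fintype.card_fin N).symm)
    obtain ⟨u, u', hne⟩ := hV v
    exact hne ((hmono u (mem_univ u) v (mem_singleton_self v)).trans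
      (hmono u' (mem_univ u') v (mem_singleton_self v)).symm)

end TwoColorsPerVertex

section BlockColoring

variable {N : ℕ} {p : Fin N → ℕ} {k : ℕ}

def blockColoring (p : Fin N → ℕ) (k : ℕ) (x y : Fin N) : ℕ :=
  if p x = p y then p x else k

lemma blockColoring_comm (x y : Fin N) : blockColoring p k x y = blockColoring p k y x := by
  unfold blockColoring
  by_cases h : p x = p y
  · simp [h]
  · simp [h, Ne.symm h]

lemma blockColoring_self (x : Fin N) : blockColoring p k x x = p x := if_pos rfl

lemma blockColoring_eq_or_eq (x y : Fin N) :
    blockColoring p k x y = p x ∨ blockColoring p k x y = k := by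
  unfold blockColoring
  split_ifs <;> simp

lemma blockColoring_of_ne {x y : Fin N} (h : p x ≠ p y) : blockColoring p k x y = k := if_neg h

theorem not_hasRainbowK13_blockColoring (p : Fin N → ℕ) (k : ℕ) :
    ¬ hasRainbowK13 (blockColoring p k) :=
  not_hasRainbowK13_of_two_colors (fun u => ⟨p u, k, blockColoring_eq_or_eq u⟩)
    fun v => ⟨p v, k, fun u => by rw [blockColoring_comm]; exact blockColoring_eq_or_eq v u⟩

lemma exists_block_ne (hsurj : ∀ i ∈ Icc 1 (k - 1), ∃ x, p x = i) (hk : 3 ≤ k) (x : Fin N) :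
    ∃ y, p y ≠ p x := by
  obtain ⟨y₁, hy₁⟩ := hsurj 1 (by simp; omega)
  obtain ⟨y₂, hy₂⟩ := hsurj 2 (by simp; omega)
  by_cases h : p x = 1
  · exact ⟨y₂, by omega⟩
  · exact ⟨y₁, by omega⟩

variable (hp : ∀ x, p x ∈ Icc 1 (k - 1)) (hsurj : ∀ i ∈ Icc 1 (k - 1), ∃ x, p x = i)
  (hk : 3 ≤ k)
include hp hsurj hk

lemma blockColoring_row_nonconstant (x : Fin N) :
    ∃ y y', blockColoring p k x y ≠ blockColoring p k x y' := by
  obtain ⟨y, hy⟩ := exists_block_ne hsurj hk x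
  have hpx := mem_Icc.mp (hp x)
  exact ⟨x, y, by rw [blockColoring_self, blockColoring_of_ne (Ne.symm hy)]; omega⟩

theorem not_hasMonoKst_blockColoring : ¬ hasMonoKst (blockColoring p k) 1 N :=
  not_hasMonoKst_one_of_nonconstant (blockColoring_row_nonconstant hp hsurj hk) fun v => by
    simpa only [blockColoring_comm _ v] using blockColoring_row_nonconstant hp hsurj hk v

theorem image_blockColoring :
    (univ ×ˢ univ).image (fun q : Fin N × Fin N => blockColoring p k q.1 q.2) = Icc 1 k := by
  ext a
  simp only [mem_image, mem_product, mem_univ, true_and, Prod.exists, mem_Icc]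
  constructor
  · rintro ⟨x, y, rfl⟩
    have hpx := mem_Icc.mp (hp x)
    rcases blockColoring_eq_or_eq (p := p) (k := k) x y with h | h <;> omega
  · rintro ⟨ha₁, ha₂⟩
    by_cases ha : a = k
    · obtain ⟨x, -⟩ := hsurj 1 (by simp; omega)
      obtain ⟨y, hy⟩ := exists_block_ne hsurj hk x
      exact ⟨x, y, by rw [blockColoring_of_ne (Ne.symm hy), ha]⟩
    · obtain ⟨x, hx⟩ := hsurj a (mem_Icc.mpr ⟨ha₁, by omega⟩)
      exact ⟨x, x, hx ▸ blockColoring_self x⟩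

end BlockColoring

section TruncatedPartition

variable {N K : ℕ}

def truncPartition (N K : ℕ) (x : Fin N) : ℕ := min (x.1 + 1) K

lemma truncPartition_mem_Icc (hK : 1 ≤ K) (x : Fin N) : truncPartition N K x ∈ Icc 1 K := by
  simp only [truncPartition, mem_Icc]
  omega

lemma truncPartition_surj (hK : K ≤ N) (i : ℕ) (hi : i ∈ Icc 1 K) :
    ∃ x, truncPartition N K x = i := by
  have hi := mem_Icc.mp hi
  exact ⟨⟨i - 1, by omega⟩, by simp only [truncPartition]; omega⟩

end TruncatedPartition

/-- for `t ≥ 5` and `t ≤ k ≤ t + 1`, there is an exact `k`-coloring of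
`K_{t,t}` with no rainbow `K_{1,3}` and no monochromatic `K_{1,t}`: partition both
sides into `k−1` nonempty parts, color edges inside the `i`-th pair `(U_i, V_i)` with
color `i`, and all remaining edges with color `k`. -/
theorem stmt15 (k t : ℕ) (ht : 5 ≤ t) (hk1 : t ≤ k) (hk2 : k ≤ t + 1) :
    ∃ c : Fin t → Fin t → ℕ, ∃ pU pV : Fin t → ℕ,
      (∀ x, pU x ∈ Finset.Icc 1 (k - 1)) ∧ (∀ y, pV y ∈ Finset.Icc 1 (k - 1)) ∧
      (∀ i ∈ Finset.Icc 1 (k - 1), (∃ x, pU x = i) ∧ (∃ y, pV y = i)) ∧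
      (∀ x y, c x y = if pU x = pV y then pU x else k) ∧
      ((Finset.univ ×ˢ Finset.univ).image (fun p : Fin t × Fin t => c p.1 p.2)
        = Finset.Icc 1 k) ∧
      ¬ hasRainbowK13 c ∧ ¬ hasMonoKst c 1 t := by
  set p := truncPartition t (k - 1)
  have hp : ∀ x, p x ∈ Icc 1 (k - 1) := truncPartition_mem_Icc (by omega)
  have hsurj : ∀ i ∈ Icc 1 (k - 1), ∃ x, p x = i := truncPartition_surj (by omega)
  have hk : 3 ≤ k := by omega
  exact ⟨blockColoring p k, p, p, hp, hp, fun i hi => ⟨hsurj i hi, hsurj i hi⟩,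
    fun _ _ => rfl, image_blockColoring hp hsurj hk, not_hasRainbowK13_blockColoring p k,
    not_hasMonoKst_blockColoring hp hsurj hk⟩
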